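/- Let W ∈ ℝ^{n×q} have full row rank (rank(W) = n < q), T ∈ ℝ^{n×m} have full column rank (rank(T) = m < n), and y ∈ ℝⁿ. Fix i ∈ {1,…,n}, assume T_{∼i} has full column rank, and let λ̂^{(∼i)} := P_{(W_{∼i})ᵀ} P⊥_{(W_{∼i})† T_{∼i}} (W_{∼i})† y_{∼i} and τ̂^{(∼i)} := ((W_{∼i})† T_{∼i})† (W_{∼i})† y_{∼i} be the partially regularized leave-i-out OLS estimates. Define the leave-i-out prediction residual ε̃_i := y_i − (w_iᵀ λ̂^{(∼i)} + t_iᵀ τ̂^{(∼i)}), where w_iᵀ and t_iᵀ are the i-th rows of W and T. Define W̃_i := P⊥_{W†e_i} W† with P_{W†e_i} = (W† e_i e_iᵀ W†ᵀ)/(e_iᵀ G_W e_i), and H_i := T (W̃_i T)† W̃_i. Then ε̃_i = e_iᵀ [diag(G_W)]⁻¹ G_W (I_n − H_i) y, where diag(G_W) is the diagonal matrix of the diagonal entries of G_W (which is invertible since G_W is positive definite). -/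

import Mathlib

open Matrix BigOperators

noncomputable section

/-- `B` is the Moore–Penrose pseudoinverse of `A`. -/
def IsMPInv {m n : Type*} [Fintype m] [Fintype n]
    (A : Matrix m n ℝ) (B : Matrix n m ℝ) : Prop :=
  A * B * A = A ∧ B * A * B = B ∧ (A * B)ᵀ = A * B ∧ (B * A)ᵀ = B * A

/-- Remove the `i`-th row of a matrix. -/
def dropRow {n q : ℕ} (A : Matrix (Fin (n + 1)) (Fin q) ℝ) (i : Fin (n + 1)) :
    Matrix (Fin n) (Fin q) ℝ :=
  Matrix.of fun j k => A (i.succAbove j) k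

/-- Remove the `i`-th entry of a vector. -/
def dropEntry {n : ℕ} (v : Fin (n + 1) → ℝ) (i : Fin (n + 1)) : Fin n → ℝ :=
  fun j => v (i.succAbove j)

/-! Since `W` has full row rank, `G_W = (W Wᵀ)⁻¹` and `W† = Wᵀ G_W`. Let `N` be the Schur
complement of the pivot `(G_W)ᵢᵢ` in `G_W`: its row and column `i` vanish, and with them
deleted it is the inverse of `W_{∼i} W_{∼i}ᵀ`. Hence `(W_{∼i})† = W_{∼i}ᵀ N_{∼i,∼i}`, which,
padded with a zero column `i`, is `Wᵀ N = W̃_i`. So `W̃_i T = (W_{∼i})† T_{∼i}`, the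
pseudo-inverses defining `H_i` and `τ̂` coincide, and the leave-`i`-out fit is
`W W̃_i (I - H_i) y + H_i y`. Finally `I - W W̃_i = eᵢ (G_W)ᵢ / (G_W)ᵢᵢ`, so the residual is
row `i` of `diag(G_W)⁻¹ G_W (I - H_i) y`. -/

namespace IsMPInv

variable {m n : Type*} [Fintype m] [Fintype n] {A : Matrix m n ℝ} {B : Matrix n m ℝ}

theorem unique {C : Matrix n m ℝ} (hB : IsMPInv A B) (hC : IsMPInv A C) : B = C := by
  obtain ⟨hB₁, hB₂, hB₃, hB₄⟩ := hB
  obtain ⟨hC₁, hC₂, hC₃, hC₄⟩ := hC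
  have hAB : A * B = A * C :=
    calc A * B = (A * C)ᵀ * (A * B)ᵀ := by rw [hC₃, hB₃, ← Matrix.mul_assoc, hC₁]
    _ = A * C := by rw [← transpose_mul, ← Matrix.mul_assoc, hB₁, hC₃]
  have hBA : B * A = C * A :=
    calc B * A = (B * A)ᵀ * (C * A)ᵀ := by
          rw [hB₄, hC₄, ← Matrix.mul_assoc, Matrix.mul_assoc B A C, Matrix.mul_assoc B, hC₁]
    _ = C * A := by rw [← transpose_mul, Matrix.mul_assoc, ← Matrix.mul_assoc A, hB₁, hC₄]
  rw [← hB₂, hBA, Matrix.mul_assoc, hAB, ← Matrix.mul_assoc, hC₂]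

theorem mul_mul_transpose (h : IsMPInv A B) : B * (A * Aᵀ) = Aᵀ := by
  rw [← Matrix.mul_assoc, ← h.2.2.2, ← transpose_mul, ← Matrix.mul_assoc, h.1]

theorem eq_transpose_mul_of_mul_eq_one [DecidableEq m] (h : IsMPInv A B) {G : Matrix m m ℝ}
    (hG : A * Aᵀ * G = 1) : B = Aᵀ * G := by
  rw [← h.mul_mul_transpose, Matrix.mul_assoc, hG, Matrix.mul_one]

theorem mul_eq_one_of_isUnit [DecidableEq m] {M G : Matrix m m ℝ} (h : IsMPInv M G)
    (hM : IsUnit M) : M * G = 1 :=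
  hM.mul_left_injective (by simp only [h.1, Matrix.one_mul])

theorem transpose_mul_transpose (h : IsMPInv A B) : Aᵀ * Bᵀ = B * A := by
  rw [← transpose_mul, h.2.2.2]

end IsMPInv

theorem Matrix.isUnit_of_rank_eq_card {m K : Type*} [Fintype m] [DecidableEq m] [Field K]
    {A : Matrix m m K} (h : A.rank = Fintype.card m) : IsUnit A :=
  mulVec_surjective_iff_isUnit.1 <| LinearMap.range_eq_top.1 <|
    Submodule.eq_top_of_finrank_eq (h.trans (Module.finrank_fintype_fun_eq_card K).symm)

theorem Matrix.posDef_mul_transpose_of_rank_eq_card {m n : Type*} [Fintype m] [Fintype n]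
    [DecidableEq m] {A : Matrix m n ℝ} (h : A.rank = Fintype.card m) : (A * Aᵀ).PosDef := by
  have hsemi := posSemidef_self_mul_conjTranspose A
  rw [conjTranspose_eq_transpose_of_trivial] at hsemi
  exact hsemi.posDef_iff_isUnit.2 (isUnit_of_rank_eq_card ((rank_self_mul_transpose A).trans h))

section PivotSchurCompl

variable {ι : Type*}

def Matrix.pivotSchurCompl (G : Matrix ι ι ℝ) (i : ι) : Matrix ι ι ℝ :=
  G - (G i i)⁻¹ • vecMulVec (Gᵀ i) (G i)

variable {G : Matrix ι ι ℝ} {i : ι}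

theorem Matrix.pivotSchurCompl_apply_left (hGi : G i i ≠ 0) (b : ι) :
    G.pivotSchurCompl i i b = 0 := by
  simp [pivotSchurCompl, vecMulVec_apply, inv_mul_cancel_left₀ hGi]

theorem Matrix.pivotSchurCompl_apply_right (hGi : G i i ≠ 0) (a : ι) :
    G.pivotSchurCompl i a i = 0 := by
  simp [pivotSchurCompl, vecMulVec_apply, mul_comm (G a i), inv_mul_cancel_left₀ hGi]

theorem Matrix.mul_pivotSchurCompl [Fintype ι] [DecidableEq ι] {M : Matrix ι ι ℝ}
    (hMG : M * G = 1) :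
    M * G.pivotSchurCompl i = 1 - (G i i)⁻¹ • vecMulVec (Pi.single i 1) (G i) := by
  have hcol : M *ᵥ Gᵀ i = Pi.single i 1 := by
    ext j
    simpa [mulVec, dotProduct, mul_apply, one_apply, Pi.single_apply, eq_comm]
      using congrFun (congrFun hMG j) i
  rw [pivotSchurCompl, Matrix.mul_sub, Matrix.mul_smul, mul_vecMulVec, hcol, hMG]

end PivotSchurCompl

section DeleteIndex

variable {n : ℕ} (i : Fin (n + 1))

theorem Matrix.submatrix_succAbove_mul_pivotSchurCompl
    {M G : Matrix (Fin (n + 1)) (Fin (n + 1)) ℝ} (hMG : M * G = 1) (hGi : G i i ≠ 0) :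
    M.submatrix i.succAbove i.succAbove * (G.pivotSchurCompl i).submatrix i.succAbove i.succAbove
      = 1 := by
  ext a b
  have hab := congrFun (congrFun (mul_pivotSchurCompl (i := i) hMG) (i.succAbove a))
    (i.succAbove b)
  rw [mul_apply, Fin.sum_univ_succAbove _ i, pivotSchurCompl_apply_left hGi, mul_zero,
    zero_add] at hab
  simpa [mul_apply, one_apply, vecMulVec_apply, Pi.single_apply, Fin.succAbove_ne] using hab

def dropRowMat : Matrix (Fin n) (Fin (n + 1)) ℝ :=
  (1 : Matrix (Fin (n + 1)) (Fin (n + 1)) ℝ).submatrix i.succAbove id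

theorem dropRowMat_mul {q : ℕ} (A : Matrix (Fin (n + 1)) (Fin q) ℝ) :
    dropRowMat i * A = dropRow A i := by
  ext j k
  simp [dropRowMat, dropRow, mul_apply, one_apply]

theorem dropRowMat_mulVec (v : Fin (n + 1) → ℝ) : dropRowMat i *ᵥ v = dropEntry v i := by
  ext j
  simp [dropRowMat, dropEntry, mulVec, dotProduct, one_apply]

theorem dropRowMat_mul_mul_transpose (M : Matrix (Fin (n + 1)) (Fin (n + 1)) ℝ) :
    dropRowMat i * M * (dropRowMat i)ᵀ = M.submatrix i.succAbove i.succAbove := by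
  ext j k
  simp [dropRowMat, mul_apply, one_apply]

theorem transpose_dropRowMat_mul_submatrix_mul_dropRowMat
    {N : Matrix (Fin (n + 1)) (Fin (n + 1)) ℝ} (hrow : ∀ b, N i b = 0) (hcol : ∀ a, N a i = 0) :
    (dropRowMat i)ᵀ * N.submatrix i.succAbove i.succAbove * dropRowMat i = N := by
  ext a b
  cases a using Fin.succAboveCases i <;> cases b using Fin.succAboveCases i <;>
  simp [dropRowMat, mul_apply, one_apply, Fin.succAbove_ne, hrow, hcol]

end DeleteIndex

theorem IsMPInv.mul_dropRowMat_eq {n q : ℕ} {W : Matrix (Fin (n + 1)) (Fin q) ℝ}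
    {G : Matrix (Fin (n + 1)) (Fin (n + 1)) ℝ} {i : Fin (n + 1)} (hG : W * Wᵀ * G = 1)
    (hGi : G i i ≠ 0) {B : Matrix (Fin q) (Fin n) ℝ} (hB : IsMPInv (dropRow W i) B) :
    B * dropRowMat i = Wᵀ * G.pivotSchurCompl i := by
  have hWd : dropRow W i = dropRowMat i * W := (dropRowMat_mul i W).symm
  have hGram :
      dropRow W i * (dropRow W i)ᵀ = (W * Wᵀ).submatrix i.succAbove i.succAbove := by
    rw [← dropRowMat_mul_mul_transpose, hWd]
    simp only [transpose_mul, Matrix.mul_assoc]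
  have hB' := hB.eq_transpose_mul_of_mul_eq_one
    (hGram ▸ submatrix_succAbove_mul_pivotSchurCompl i hG hGi)
  rw [hB', hWd, transpose_mul]
  simp only [Matrix.mul_assoc]
  rw [← Matrix.mul_assoc (dropRowMat i)ᵀ, transpose_dropRowMat_mul_submatrix_mul_dropRowMat i
    (pivotSchurCompl_apply_left hGi) (pivotSchurCompl_apply_right hGi)]

theorem Matrix.one_sub_smul_vecMulVec_mul_eq_mul_pivotSchurCompl {m q : Type*} [Fintype m]
    [Fintype q] [DecidableEq m] [DecidableEq q] {W : Matrix m q ℝ} {G : Matrix m m ℝ}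
    (hG : W * Wᵀ * G = 1) (hGs : Gᵀ = G) (i : m) :
    (1 - (G i i)⁻¹ • vecMulVec ((Wᵀ * G)ᵀ i) ((Wᵀ * G)ᵀ i)) * (Wᵀ * G)
      = Wᵀ * G.pivotSchurCompl i := by
  have hu : (Wᵀ * G)ᵀ i = Wᵀ *ᵥ G i := by
    rw [transpose_mul, hGs]
    ext k
    simp [mul_apply, mulVec, dotProduct, mul_comm]
  have hv : (Wᵀ *ᵥ G i) ᵥ* (Wᵀ * G) = G i := by
    rw [mulVec_transpose, vecMul_vecMul, ← Matrix.mul_assoc, hG, vecMul_one]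
  rw [hu, Matrix.sub_mul, Matrix.one_mul, Matrix.smul_mul, vecMulVec_mul, hv, pivotSchurCompl,
    hGs, Matrix.mul_sub, Matrix.mul_smul, mul_vecMulVec]

theorem Matrix.one_sub_mul_mul_pivotSchurCompl_row {m q : Type*} [Fintype m] [Fintype q]
    [DecidableEq m] {W : Matrix m q ℝ} {G : Matrix m m ℝ} (hG : W * Wᵀ * G = 1) (i : m) :
    (1 - W * (Wᵀ * G.pivotSchurCompl i) : Matrix m m ℝ) i = (G i i)⁻¹ • G i := by
  rw [← Matrix.mul_assoc, mul_pivotSchurCompl hG, sub_sub_cancel]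
  ext k
  simp [vecMulVec_apply]

theorem Matrix.inv_diagonal_mul_row {m : Type*} [Fintype m] [DecidableEq m] {d : m → ℝ}
    (hd : ∀ j, d j ≠ 0) (G : Matrix m m ℝ) (i : m) :
    ((diagonal d)⁻¹ * G) i = (d i)⁻¹ • G i := by
  have hinv : (diagonal d)⁻¹ = diagonal d⁻¹ :=
    inv_eq_right_inv (by simp [diagonal_mul_diagonal, hd])
  ext k
  simp [hinv]

theorem loo_estimate_eq {n q p : ℕ} {W : Matrix (Fin (n + 1)) (Fin q) ℝ}
    {T : Matrix (Fin (n + 1)) (Fin p) ℝ} {i : Fin (n + 1)} {B : Matrix (Fin q) (Fin n) ℝ}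
    (hB : IsMPInv (dropRow W i) B) (L : Matrix (Fin p) (Fin q) ℝ) (y : Fin (n + 1) → ℝ) :
    ((dropRow W i)ᵀ * Bᵀ) *ᵥ ((1 - B * dropRow T i * L) *ᵥ (B *ᵥ dropEntry y i))
      = (B * dropRowMat i) *ᵥ ((1 - T * L * (B * dropRowMat i)) *ᵥ y) := by
  have hPB : ∀ {r : Type} (X : Matrix (Fin n) r ℝ), B * (dropRow W i * (B * X)) = B * X := by
    intro r X
    rw [← Matrix.mul_assoc, ← Matrix.mul_assoc, hB.2.1]
  rw [hB.transpose_mul_transpose, ← dropRowMat_mulVec, ← dropRowMat_mul i T]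
  simp only [mulVec_mulVec]
  congr 1
  simp only [Matrix.sub_mul, Matrix.mul_sub, Matrix.one_mul, Matrix.mul_one, Matrix.mul_assoc,
    hPB]

theorem apply_sub_dotProduct_add_dotProduct {ι κ r : Type*} [Fintype ι] [Fintype κ]
    [Fintype r] [DecidableEq ι] (W : Matrix ι κ ℝ) (T : Matrix ι r ℝ) (Wt : Matrix κ ι ℝ)
    (L : Matrix r κ ℝ) (y : ι → ℝ) (i : ι) :
    y i - (W i ⬝ᵥ (Wt *ᵥ ((1 - T * L * Wt) *ᵥ y)) + T i ⬝ᵥ (L *ᵥ (Wt *ᵥ y)))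
      = (((1 - W * Wt) * (1 - T * L * Wt) : Matrix ι ι ℝ) *ᵥ y) i := by
  change y i - ((W *ᵥ _) i + (T *ᵥ _) i) = _
  simp only [← mulVec_mulVec, sub_mulVec, one_mulVec, Pi.sub_apply]
  ring

theorem loo_prediction_residual_general
    {n q m : ℕ}
    (W : Matrix (Fin (n + 1)) (Fin q) ℝ) (T : Matrix (Fin (n + 1)) (Fin m) ℝ)
    (y : Fin (n + 1) → ℝ)
    (hW : W.rank = n + 1)
    (i : Fin (n + 1))
    (Wp : Matrix (Fin q) (Fin (n + 1)) ℝ) (hWp : IsMPInv W Wp)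
    (GW : Matrix (Fin (n + 1)) (Fin (n + 1)) ℝ) (hGW : IsMPInv (W * Wᵀ) GW)
    (Wdp : Matrix (Fin q) (Fin n) ℝ) (hWdp : IsMPInv (dropRow W i) Wdp)
    (L : Matrix (Fin m) (Fin q) ℝ) (hL : IsMPInv (Wdp * dropRow T i) L)
    -- λ̂^{(∼i)} = P_{(W_{∼i})ᵀ} P⊥_{(W_{∼i})† T_{∼i}} (W_{∼i})† y_{∼i}
    (lam : Fin q → ℝ)
    (hlam : lam = ((dropRow W i)ᵀ * Wdpᵀ) *ᵥ
      (((1 : Matrix (Fin q) (Fin q) ℝ) - (Wdp * dropRow T i) * L) *ᵥ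
        (Wdp *ᵥ dropEntry y i)))
    -- τ̂^{(∼i)} = ((W_{∼i})† T_{∼i})† (W_{∼i})† y_{∼i}
    (tau : Fin m → ℝ) (htau : tau = L *ᵥ (Wdp *ᵥ dropEntry y i))
    -- leave-`i`-out prediction residual ε̃_i = y_i − (w_iᵀ λ̂^{(∼i)} + t_iᵀ τ̂^{(∼i)})
    (eps : ℝ) (heps : eps = y i - ((W i) ⬝ᵥ lam + (T i) ⬝ᵥ tau))
    -- `W̃_i = P⊥_{W†e_i} W†` with `P_{W†e_i} = (W† e_i e_iᵀ W†ᵀ)/(e_iᵀ G_W e_i)`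
    (Wt : Matrix (Fin q) (Fin (n + 1)) ℝ)
    (hWt : Wt = ((1 : Matrix (Fin q) (Fin q) ℝ)
      - (GW i i)⁻¹ • vecMulVec (Wpᵀ i) (Wpᵀ i)) * Wp)
    (K : Matrix (Fin m) (Fin q) ℝ) (hK : IsMPInv (Wt * T) K)
    -- `H_i = T (W̃_i T)† W̃_i` and `D = diag(G_W)`
    (H : Matrix (Fin (n + 1)) (Fin (n + 1)) ℝ) (hH : H = T * K * Wt)
    (D : Matrix (Fin (n + 1)) (Fin (n + 1)) ℝ)
    (hD : D = Matrix.diagonal fun j => GW j j) :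
    eps = ((D⁻¹ * GW * ((1 : Matrix (Fin (n + 1)) (Fin (n + 1)) ℝ) - H)) *ᵥ y) i := by
  have hM : (W * Wᵀ).PosDef := posDef_mul_transpose_of_rank_eq_card (by simpa using hW)
  have hMG : W * Wᵀ * GW = 1 := hGW.mul_eq_one_of_isUnit hM.isUnit
  have hGpos : GW.PosDef := inv_eq_right_inv hMG ▸ hM.inv
  have hWt' : Wt = Wᵀ * GW.pivotSchurCompl i := by
    rw [hWt, hWp.eq_transpose_mul_of_mul_eq_one hMG,
      one_sub_smul_vecMulVec_mul_eq_mul_pivotSchurCompl hMG hGpos.isHermitian.eq]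
  have hWdpE : Wdp * dropRowMat i = Wt :=
    hWt' ▸ hWdp.mul_dropRowMat_eq hMG hGpos.diag_pos.ne'
  have hKL : K = L := by
    rw [← hWdpE, Matrix.mul_assoc, dropRowMat_mul] at hK
    exact hK.unique hL
  have hrow : (1 - W * Wt : Matrix (Fin (n + 1)) (Fin (n + 1)) ℝ) i
      = ((diagonal fun j => GW j j)⁻¹ * GW) i := by
    rw [hWt', one_sub_mul_mul_pivotSchurCompl_row hMG,
      inv_diagonal_mul_row (fun _ => hGpos.diag_pos.ne')]
  rw [heps, hlam, htau, loo_estimate_eq hWdp, ← dropRowMat_mulVec, mulVec_mulVec _ Wdp, hWdpE,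
    apply_sub_dotProduct_add_dotProduct, hH, hKL, hD]
  rw [← mulVec_mulVec y (1 - W * Wt), ← mulVec_mulVec y (_ * GW)]
  exact congrArg (· ⬝ᵥ _) hrow

theorem loo_prediction_residual
    {n q m : ℕ}
    (W : Matrix (Fin (n + 1)) (Fin q) ℝ) (T : Matrix (Fin (n + 1)) (Fin m) ℝ)
    (y : Fin (n + 1) → ℝ)
    (hW : W.rank = n + 1) (hnq : n + 1 < q)
    (hT : T.rank = m) (hmn : m < n + 1)
    (i : Fin (n + 1))
    (hTd : (dropRow T i).rank = m)
    (Wp : Matrix (Fin q) (Fin (n + 1)) ℝ) (hWp : IsMPInv W Wp)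
    (GW : Matrix (Fin (n + 1)) (Fin (n + 1)) ℝ) (hGW : IsMPInv (W * Wᵀ) GW)
    (Wdp : Matrix (Fin q) (Fin n) ℝ) (hWdp : IsMPInv (dropRow W i) Wdp)
    (L : Matrix (Fin m) (Fin q) ℝ) (hL : IsMPInv (Wdp * dropRow T i) L)
    -- λ̂^{(∼i)} = P_{(W_{∼i})ᵀ} P⊥_{(W_{∼i})† T_{∼i}} (W_{∼i})† y_{∼i}
    (lam : Fin q → ℝ)
    (hlam : lam = ((dropRow W i)ᵀ * Wdpᵀ) *ᵥ
      (((1 : Matrix (Fin q) (Fin q) ℝ) - (Wdp * dropRow T i) * L) *ᵥ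
        (Wdp *ᵥ dropEntry y i)))
    -- τ̂^{(∼i)} = ((W_{∼i})† T_{∼i})† (W_{∼i})† y_{∼i}
    (tau : Fin m → ℝ) (htau : tau = L *ᵥ (Wdp *ᵥ dropEntry y i))
    -- leave-`i`-out prediction residual ε̃_i = y_i − (w_iᵀ λ̂^{(∼i)} + t_iᵀ τ̂^{(∼i)})
    (eps : ℝ) (heps : eps = y i - ((W i) ⬝ᵥ lam + (T i) ⬝ᵥ tau))
    -- `W̃_i = P⊥_{W†e_i} W†` with `P_{W†e_i} = (W† e_i e_iᵀ W†ᵀ)/(e_iᵀ G_W e_i)`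
    (Wt : Matrix (Fin q) (Fin (n + 1)) ℝ)
    (hWt : Wt = ((1 : Matrix (Fin q) (Fin q) ℝ)
      - (GW i i)⁻¹ • vecMulVec (Wpᵀ i) (Wpᵀ i)) * Wp)
    (K : Matrix (Fin m) (Fin q) ℝ) (hK : IsMPInv (Wt * T) K)
    -- `H_i = T (W̃_i T)† W̃_i` and `D = diag(G_W)`
    (H : Matrix (Fin (n + 1)) (Fin (n + 1)) ℝ) (hH : H = T * K * Wt)
    (D : Matrix (Fin (n + 1)) (Fin (n + 1)) ℝ)
    (hD : D = Matrix.diagonal fun j => GW j j) :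
    eps = ((D⁻¹ * GW * ((1 : Matrix (Fin (n + 1)) (Fin (n + 1)) ℝ) - H)) *ᵥ y) i :=
  loo_prediction_residual_general W T y hW i Wp hWp GW hGW Wdp hWdp L hL lam hlam tau htau eps heps
    Wt hWt K hK H hH D hD
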